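/- arXiv:2212.11364 — 2 statements merged into one kernel-verified Lean document; each statement's English description precedes it below -/
import Mathlib

section
/- Let δ be a finite C-sequence dataset and L an L-sequence. Then the maximum utility of L in δ is at most the L-sequence-weighted utilization of L with respect to the length |L| of L, i.e., u_max(L) ≤ LWU_{|L|}(L). -/
open scoped Classical

/-- A C-eventset: a finite set of event labels together with a duration. -/
abbrev CEventset (α : Type*) := Finset α × ℕ

/-- A C-sequence: a finite list of C-eventsets. -/
abbrev CSeq (α : Type*) := List (CEventset α)

/-- An L-sequence: a finite list of (nonempty) finite label sets. -/
abbrev LSeq (α : Type*) := List (Finset α)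

/-- Utility of a C-eventset: duration times the sum of external utilities of its labels. -/
noncomputable def ue {α : Type*} (p : α → NNReal) (σ : CEventset α) : NNReal :=
  (σ.2 : NNReal) * ∑ l ∈ σ.1, p l

/-- Utility of a C-sequence: the sum of the utilities of its C-eventsets. -/
noncomputable def us {α : Type*} (p : α → NNReal) (C : CSeq α) : NNReal :=
  (C.map (ue p)).sum

/-- Containment of C-eventsets: label-set inclusion with equal durations. -/
def CContains {α : Type*} (σa σb : CEventset α) : Prop :=
  σa.1 ⊆ σb.1 ∧ σa.2 = σb.2

/-- `C` is a C-subsequence of `C'`: there is a strictly increasing index map under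
which each C-eventset of `C` is contained in the corresponding one of `C'`. -/
def CSub {α : Type*} (C C' : CSeq α) : Prop :=
  ∃ C₂ : CSeq α, C₂.Sublist C' ∧ List.Forall₂ CContains C C₂

/-- A C-sequence matches an L-sequence iff they have equal length and the label set of
each C-eventset equals the corresponding label set of the L-sequence. -/
def Matches {α : Type*} (C : CSeq α) (L : LSeq α) : Prop :=
  C.map Prod.fst = L

/-- `L` is an L-subsequence of `L'`. -/
def LSub {α : Type*} (L L' : LSeq α) : Prop :=
  ∃ L₂ : LSeq α, L₂.Sublist L' ∧ List.Forall₂ (· ⊆ ·) L L₂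

/-- Maximum of the utility set `u_l(L, C)` (max of the empty set is 0). -/
noncomputable def ulMax {α : Type*} (p : α → NNReal) (L : LSeq α) (C : CSeq α) : NNReal :=
  sSup {x | ∃ C', Matches C' L ∧ CSub C' C ∧ us p C' = x}

/-- Maximum utility `u_max(L)` of an L-sequence in a C-sequence dataset. -/
noncomputable def umax {α : Type*} (p : α → NNReal) (δ : Finset (CSeq α)) (L : LSeq α) :
    NNReal :=
  ∑ C ∈ δ, ulMax p L C

/-- Maximum utility of `k` C-eventsets in a C-sequence (max of the empty set is 0). -/
noncomputable def umaxk {α : Type*} (p : α → NNReal) (C : CSeq α) (k : ℕ) : NNReal :=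
  sSup {x | ∃ C', CSub C' C ∧ C'.length ≤ k ∧ us p C' = x}

/-- L-sequence-weighted utilization `LWU_k(L)` over the dataset `δ`. -/
noncomputable def LWU {α : Type*} (p : α → NNReal) (δ : Finset (CSeq α)) (k : ℕ)
    (L : LSeq α) : NNReal :=
  ∑ C ∈ δ, if ∃ C', CSub C' C ∧ Matches C' L then umaxk p C k else 0

/-- Projected utilization `P_k(L) = u_max(L) + LWU_{k - |L|}(L)`. -/
noncomputable def Pk {α : Type*} (p : α → NNReal) (δ : Finset (CSeq α)) (k : ℕ)
    (L : LSeq α) : NNReal :=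
  umax p δ L + LWU p δ (k - L.length) L

lemma ue_mono {α : Type*} (p : α → NNReal) {σa σb : CEventset α}
    (h : CContains σa σb) : ue p σa ≤ ue p σb := by
  unfold ue
  rw [h.2]
  exact mul_le_mul_right (Finset.sum_le_sum_of_subset h.1) _

lemma us_le_of_csub {α : Type*} (p : α → NNReal) {C' C : CSeq α}
    (h : CSub C' C) : us p C' ≤ us p C := by
  obtain ⟨C₂, hsub, hf⟩ := h
  have h1 : us p C' ≤ us p C₂ := by
    clear hsub
    induction hf with
    | nil => exact le_refl _
    | cons hc _ ih =>
      simp only [us, List.map_cons, List.sum_cons]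
      exact add_le_add (ue_mono p hc) ih
  have h2 : us p C₂ ≤ us p C := List.Sublist.sum_le_sum (hsub.map (ue p)) (by simp)
  exact h1.trans h2

/-- u_max(L) ≤ LWU_{|L|}(L). -/
theorem umax_le_LWU_length {α : Type*} (p : α → NNReal) (δ : Finset (CSeq α))
    (L : LSeq α) (hL : ∀ c ∈ L, c.Nonempty) :
    umax p δ L ≤ LWU p δ L.length L := by
  unfold umax LWU
  refine Finset.sum_le_sum fun C _ => ?_
  unfold ulMax
  by_cases hne : {x | ∃ C', Matches C' L ∧ CSub C' C ∧ us p C' = x}.Nonempty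
  · obtain ⟨x₀, C₀, hm₀, hs₀, _⟩ := hne
    rw [if_pos ⟨C₀, hs₀, hm₀⟩]
    refine csSup_le ⟨x₀, C₀, hm₀, hs₀, ‹_›⟩ fun x hx => ?_
    obtain ⟨C', hm, hs, hx⟩ := hx
    have hlen : C'.length ≤ L.length := by
      rw [← hm, List.length_map]
    refine le_csSup ⟨us p C, ?_⟩ ⟨C', hs, hlen, hx⟩
    rintro y ⟨C'', hs'', _, rfl⟩
    exact us_le_of_csub p hs''
  · rw [Set.not_nonempty_iff_eq_empty] at hne
    rw [hne, csSup_empty]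
    exact bot_le
end

section
/- Let δ be a finite C-sequence dataset, and let L, L' be L-sequences with L an L-subsequence of L', and let k', k be positive integers with |L'| ≤ k' ≤ k. Then LWU_{k'}(L') ≤ LWU_k(L). -/
open scoped Classical

/-! Any C-subsequence matching `L'` can be trimmed, using `L ⊑ L'`, to a C-subsequence of the same
C-sequence matching `L`, so every C-sequence counted in `LWU_{k'}(L')` is also counted in
`LWU_k(L)`; and it contributes no more there, since `u_maxk(C, ·)` is monotone in the size bound. -/

section

variable {α : Type*}

instance : IsTrans (CEventset α) CContains :=
  ⟨fun _ _ _ h₁ h₂ => ⟨h₁.1.trans h₂.1, h₁.2.trans h₂.2⟩⟩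

theorem cSub_iff_sublistForall₂ {C C' : CSeq α} :
    CSub C C' ↔ List.SublistForall₂ CContains C C' := by
  rw [List.sublistForall₂_iff, CSub, exists_congr fun _ => and_comm]

theorem CSub.trans {A B C : CSeq α} (h₁ : CSub A B) (h₂ : CSub B C) : CSub A C :=
  cSub_iff_sublistForall₂.2 <|
    _root_.trans (cSub_iff_sublistForall₂.1 h₁) (cSub_iff_sublistForall₂.1 h₂)

theorem CContains.ue_le (p : α → NNReal) {σ τ : CEventset α} (h : CContains σ τ) :
    ue p σ ≤ ue p τ := by
  rw [ue, ue, h.2]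
  gcongr
  exact h.1

theorem CSub.us_le (p : α → NNReal) {C C' : CSeq α} (h : CSub C C') : us p C ≤ us p C' := by
  obtain ⟨C₂, hsub, hcont⟩ := h
  have hle : List.Forall₂ (· ≤ ·) (C.map (ue p)) (C₂.map (ue p)) :=
    List.forall₂_map_left_iff.2 <| List.forall₂_map_right_iff.2 <|
      hcont.imp fun _ _ => CContains.ue_le p
  exact hle.sum_le_sum.trans <| (hsub.map (ue p)).sum_le_sum fun _ _ => zero_le

theorem umaxk_monotone (p : α → NNReal) (C : CSeq α) : Monotone (umaxk p C) := by
  intro k' k hk'k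
  apply csSup_le_csSup
  · exact ⟨us p C, by rintro _ ⟨C', hC', -, rfl⟩; exact hC'.us_le p⟩
  · exact ⟨0, [], ⟨[], List.nil_sublist _, .nil⟩, Nat.zero_le _, rfl⟩
  · rintro _ ⟨C', hC', hlen, rfl⟩
    exact ⟨C', hC', hlen.trans hk'k, rfl⟩

theorem exists_matches_forall₂_cContains {M : LSeq α} {D : CSeq α}
    (h : List.Forall₂ (fun c σ => c ⊆ σ.1) M D) :
    ∃ E : CSeq α, Matches E M ∧ List.Forall₂ CContains E D := by
  induction h with
  | nil => exact ⟨[], rfl, .nil⟩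
  | @cons c σ _ _ hcσ _ ih =>
    obtain ⟨E, hE, hED⟩ := ih
    exact ⟨(c, σ.2) :: E, congrArg (c :: ·) hE, .cons ⟨hcσ, rfl⟩ hED⟩

theorem LSub.exists_cSub_matches {L L' : LSeq α} {C C' : CSeq α} (hsub : LSub L L')
    (hm : Matches C' L') (hc : CSub C' C) : ∃ C'', CSub C'' C ∧ Matches C'' L := by
  obtain ⟨L₂, hL₂, hLL₂⟩ := hsub
  rw [← hm] at hL₂
  obtain ⟨C₂, hC₂, rfl⟩ := List.sublist_map_iff.1 hL₂
  obtain ⟨E, hE, hEC₂⟩ := exists_matches_forall₂_cContains (List.forall₂_map_right_iff.1 hLL₂)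
  exact ⟨E, CSub.trans ⟨C₂, hC₂, hEC₂⟩ hc, hE⟩

end

theorem LWU_anti_mono_general {α : Type*} (p : α → NNReal) (δ : Finset (CSeq α))
    (L L' : LSeq α) (hsub : LSub L L') (k' k : ℕ) (hk'k : k' ≤ k) :
    LWU p δ k' L' ≤ LWU p δ k L := by
  refine Finset.sum_le_sum fun C _ => ?_
  split_ifs with hL' hL
  · exact umaxk_monotone p C hk'k
  · obtain ⟨C', hC', hm⟩ := hL'
    exact absurd (hsub.exists_cSub_matches hm hC') hL
  · exact zero_le
  · exact le_rfl

/-- if L ⊑ L' and |L'| ≤ k' ≤ k then LWU_{k'}(L') ≤ LWU_k(L). -/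
theorem LWU_anti_mono {α : Type*} (p : α → NNReal) (δ : Finset (CSeq α))
    (L L' : LSeq α) (hL : ∀ c ∈ L, c.Nonempty) (hL' : ∀ c ∈ L', c.Nonempty)
    (hsub : LSub L L') (k' k : ℕ) (hk' : 0 < k') (hk : 0 < k)
    (hlen : L'.length ≤ k') (hk'k : k' ≤ k) :
    LWU p δ k' L' ≤ LWU p δ k L :=
  LWU_anti_mono_general p δ L L' hsub k' k hk'k
end
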